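/- arXiv:2311.09964 — 2 statements merged into one kernel-verified Lean document; each statement's English description precedes it below -/
import Mathlib

section
/- Let $\Omega\subseteq\mathbb{R}^n$ be open and $0<\delta_1<\delta_2\le n$. For every function $f:\Omega\to[-\infty,\infty]$, the Choquet integrals with respect to Hausdorff content satisfy $\Big(\int_\Omega |f(x)|\,d\mathcal{H}^{\delta_2}_\infty\Big)^{1/\delta_2} \le \Big(\tfrac{\delta_2}{\delta_1}\Big)^{1/\delta_2}\Big(\int_\Omega |f(x)|^{\delta_1/\delta_2}\,d\mathcal{H}^{\delta_1}_\infty\Big)^{1/\delta_1}$. -/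
open MeasureTheory Metric Set ENNReal

/-- δ-dimensional Hausdorff content via countable ball coverings. -/
noncomputable def hc (n : ℕ) (δ : ℝ) (E : Set (EuclideanSpace ℝ (Fin n))) : ℝ≥0∞ :=
  ⨅ (c : ℕ → EuclideanSpace ℝ (Fin n)) (r : ℕ → ℝ) (_ : ∀ i, 0 < r i)
    (_ : E ⊆ ⋃ i, ball (c i) (r i)), ∑' i, ENNReal.ofReal (r i ^ δ)

/-- Choquet integral of a nonnegative function over Ω with respect to `hc n δ`. -/
noncomputable def choquet (n : ℕ) (δ : ℝ) (Ω : Set (EuclideanSpace ℝ (Fin n)))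
    (f : EuclideanSpace ℝ (Fin n) → ℝ≥0∞) : ℝ≥0∞ :=
  ∫⁻ t in Ioi (0:ℝ), hc n δ {x | x ∈ Ω ∧ ENNReal.ofReal t < f x}

lemma hc_mono (n : ℕ) (δ : ℝ) {E F : Set (EuclideanSpace ℝ (Fin n))} (h : E ⊆ F) :
    hc n δ E ≤ hc n δ F := by
  unfold hc
  exact le_iInf fun c => le_iInf fun r => le_iInf fun hr => le_iInf fun hcov =>
    iInf_le_of_le c <| iInf_le_of_le r <| iInf_le_of_le hr <|
      iInf_le_of_le (h.trans hcov) le_rfl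

lemma hc_le_cover (n : ℕ) (δ : ℝ) (E : Set (EuclideanSpace ℝ (Fin n)))
    (c : ℕ → EuclideanSpace ℝ (Fin n)) (r : ℕ → ℝ) (hr : ∀ i, 0 < r i)
    (hcov : E ⊆ ⋃ i, ball (c i) (r i)) :
    hc n δ E ≤ ∑' i, ENNReal.ofReal (r i ^ δ) := by
  unfold hc
  exact iInf_le_of_le c <| iInf_le_of_le r <| iInf_le_of_le hr <| iInf_le_of_le hcov le_rfl

lemma tsum_rpow_le (a : ℕ → ℝ≥0∞) {p : ℝ} (hp : 1 ≤ p) :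
    ∑' i, a i ^ p ≤ (∑' i, a i) ^ p := by
  have h1 : (0:ℝ) ≤ p - 1 := by linarith
  have key : ∀ x : ℝ≥0∞, x ^ (p - 1) * x = x ^ p := by
    intro x
    have := ENNReal.rpow_add_of_nonneg (x := x) (p - 1) 1 h1 zero_le_one
    rw [ENNReal.rpow_one] at this
    rw [← this]
    norm_num
  calc ∑' i, a i ^ p = ∑' i, a i ^ (p - 1) * a i := by
        simp_rw [key]
    _ ≤ ∑' i, (∑' j, a j) ^ (p - 1) * a i := by
        exact ENNReal.tsum_le_tsum fun i =>
          mul_le_mul_left (ENNReal.rpow_le_rpow (ENNReal.le_tsum i) h1) _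
    _ = (∑' j, a j) ^ (p - 1) * ∑' i, a i := ENNReal.tsum_mul_left
    _ = (∑' j, a j) ^ p := key _

lemma hc_le_hc_rpow (n : ℕ) {δ₁ δ₂ : ℝ} (h1 : 0 < δ₁) (h2 : δ₁ ≤ δ₂)
    (E : Set (EuclideanSpace ℝ (Fin n))) :
    hc n δ₂ E ≤ (hc n δ₁ E) ^ (δ₂ / δ₁) := by
  have hδ₂ : 0 < δ₂ := lt_of_lt_of_le h1 h2
  have hp : (1:ℝ) ≤ δ₂ / δ₁ := (one_le_div h1).mpr h2
  have hpp : (0:ℝ) < δ₂ / δ₁ := by positivity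
  have key : (hc n δ₂ E) ^ (δ₁ / δ₂) ≤ hc n δ₁ E := by
    unfold hc
    refine le_iInf fun c => le_iInf fun r => le_iInf fun hr => le_iInf fun hcov => ?_
    rw [← ENNReal.rpow_le_rpow_iff hpp, ← ENNReal.rpow_mul]
    have hmul : δ₁ / δ₂ * (δ₂ / δ₁) = 1 := by field_simp
    rw [hmul, ENNReal.rpow_one]
    calc hc n δ₂ E ≤ ∑' i, ENNReal.ofReal (r i ^ δ₂) := hc_le_cover n δ₂ E c r hr hcov
      _ = ∑' i, (ENNReal.ofReal (r i ^ δ₁)) ^ (δ₂ / δ₁) := by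
          congr 1; funext i
          rw [← ENNReal.ofReal_rpow_of_pos (hr i), ← ENNReal.ofReal_rpow_of_pos (hr i),
            ← ENNReal.rpow_mul]
          congr 1
          field_simp
      _ ≤ (∑' i, ENNReal.ofReal (r i ^ δ₁)) ^ (δ₂ / δ₁) := tsum_rpow_le _ hp
  calc hc n δ₂ E = ((hc n δ₂ E) ^ (δ₁ / δ₂)) ^ (δ₂ / δ₁) := by
        rw [← ENNReal.rpow_mul]
        have : δ₁ / δ₂ * (δ₂ / δ₁) = 1 := by field_simp
        rw [this, ENNReal.rpow_one]
    _ ≤ (hc n δ₁ E) ^ (δ₂ / δ₁) := ENNReal.rpow_le_rpow key hpp.le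

theorem stmt_2 (n : ℕ) (Ω : Set (EuclideanSpace ℝ (Fin n))) (hΩ : IsOpen Ω)
    (δ₁ δ₂ : ℝ) (h1 : 0 < δ₁) (h2 : δ₁ < δ₂) (h3 : δ₂ ≤ n)
    (f : EuclideanSpace ℝ (Fin n) → EReal) :
    (choquet n δ₂ Ω (fun x => (f x).abs)) ^ (1 / δ₂) ≤
      (ENNReal.ofReal (δ₂ / δ₁)) ^ (1 / δ₂) *
        (choquet n δ₁ Ω (fun x => (f x).abs ^ (δ₁ / δ₂))) ^ (1 / δ₁) := by
  have hδ₂ : (0:ℝ) < δ₂ := h1.trans h2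
  set θ : ℝ := δ₁ / δ₂ with hθdef
  have hθ : 0 < θ := by positivity
  have hθ1 : θ < 1 := (div_lt_one hδ₂).mpr h2
  set g : EuclideanSpace ℝ (Fin n) → ℝ≥0∞ := fun x => (f x).abs with hgdef
  set A : ℝ → Set (EuclideanSpace ℝ (Fin n)) :=
    fun t => {x | x ∈ Ω ∧ ENNReal.ofReal t < g x} with hAdef
  set B : ℝ → Set (EuclideanSpace ℝ (Fin n)) :=
    fun s => {x | x ∈ Ω ∧ ENNReal.ofReal s < g x ^ θ} with hBdef
  set G : ℝ → ℝ≥0∞ := fun s => hc n δ₁ (B s) with hGdef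
  set I : ℝ≥0∞ := ∫⁻ s in Ioi (0:ℝ), G s with hIdef
  have hchoq1 : choquet n δ₁ Ω (fun x => (f x).abs ^ (δ₁ / δ₂)) = I := rfl
  have hchoq2 : choquet n δ₂ Ω (fun x => (f x).abs) = ∫⁻ t in Ioi (0:ℝ), hc n δ₂ (A t) := rfl
  -- B (t ^ θ) = A t for t > 0
  have hBA : ∀ t : ℝ, 0 < t → B (t ^ θ) = A t := by
    intro t ht
    ext x
    simp only [hBdef, hAdef, mem_setOf_eq, and_congr_right_iff]
    intro _
    rw [← ENNReal.ofReal_rpow_of_pos ht, ENNReal.rpow_lt_rpow_iff hθ]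
  -- G is antitone
  have hGanti : Antitone G := by
    intro s s' hss'
    exact hc_mono n δ₁ fun x hx => ⟨hx.1, lt_of_le_of_lt (ENNReal.ofReal_le_ofReal hss') hx.2⟩
  have hGmeas : Measurable G := hGanti.measurable
  -- s * G s ≤ I for s > 0
  have hGs : ∀ s : ℝ, 0 < s → ENNReal.ofReal s * G s ≤ I := by
    intro s hs
    have e1 : ENNReal.ofReal s * G s = ∫⁻ _ in Ioc (0:ℝ) s, G s := by
      rw [setLIntegral_const, Real.volume_Ioc, mul_comm]
      norm_num
    rw [e1]
    calc ∫⁻ _ in Ioc (0:ℝ) s, G s ≤ ∫⁻ t in Ioc (0:ℝ) s, G t :=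
          setLIntegral_mono hGmeas fun t ht => hGanti ht.2
      _ ≤ ∫⁻ t in Ioi (0:ℝ), G t := lintegral_mono_set Ioc_subset_Ioi_self
  by_cases hI0 : I = 0
  · -- degenerate case: everything vanishes
    have hG0 : ∀ s : ℝ, 0 < s → G s = 0 := by
      intro s hs
      have := hGs s hs
      rw [hI0, nonpos_iff_eq_zero, mul_eq_zero] at this
      rcases this with h | h
      · exact absurd h (by simp [ENNReal.ofReal_eq_zero, not_le, hs])
      · exact h
    have hzero : choquet n δ₂ Ω (fun x => (f x).abs) = 0 := by
      rw [hchoq2]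
      have hle : (∫⁻ t in Ioi (0:ℝ), hc n δ₂ (A t)) ≤ ∫⁻ _ in Ioi (0:ℝ), (0:ℝ≥0∞) := by
        refine lintegral_mono_ae ((ae_restrict_iff' measurableSet_Ioi).2 (ae_of_all _ ?_))
        intro t ht
        have ht' : (0:ℝ) < t := ht
        have hle2 : hc n δ₂ (A t) ≤ (hc n δ₁ (A t)) ^ (δ₂ / δ₁) :=
          hc_le_hc_rpow n h1 h2.le (A t)
        have hG : hc n δ₁ (A t) = 0 := by
          rw [← hBA t ht']
          exact hG0 _ (Real.rpow_pos_of_pos ht' θ)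
        rwa [hG, ENNReal.zero_rpow_of_pos (by positivity)] at hle2
      simpa using hle
    rw [hzero, ENNReal.zero_rpow_of_pos (by positivity)]
    exact zero_le
  by_cases hItop : I = ⊤
  · -- degenerate case: RHS is ⊤
    rw [hchoq1, hItop, ENNReal.top_rpow_of_pos (by positivity), ENNReal.mul_top]
    · exact le_top
    · exact (ENNReal.rpow_pos (ENNReal.ofReal_pos.2 (by positivity)) ENNReal.ofReal_ne_top).ne'
  -- main case: 0 < I < ⊤
  -- change of variables t ↦ t ^ θ
  have himg : (fun t : ℝ => t ^ θ) '' Ioi 0 = Ioi 0 := by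
    apply Subset.antisymm
    · rintro s ⟨t, ht, rfl⟩
      exact Real.rpow_pos_of_pos ht θ
    · intro s hs
      have hs' : (0:ℝ) < s := hs
      refine ⟨s ^ θ⁻¹, Real.rpow_pos_of_pos hs' θ⁻¹, ?_⟩
      show (s ^ θ⁻¹) ^ θ = s
      rw [← Real.rpow_mul hs'.le, inv_mul_cancel₀ hθ.ne', Real.rpow_one]
  have hinj : InjOn (fun t : ℝ => t ^ θ) (Ioi 0) := by
    intro a ha b hb hab
    by_contra hne
    rcases lt_or_gt_of_ne hne with h | h
    · exact absurd hab (ne_of_lt (Real.rpow_lt_rpow (le_of_lt ha) h hθ))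
    · exact absurd hab.symm (ne_of_lt (Real.rpow_lt_rpow (le_of_lt hb) h hθ))
  have hder : ∀ t ∈ Ioi (0:ℝ),
      HasDerivWithinAt (fun t : ℝ => t ^ θ) (θ * t ^ (θ - 1)) (Ioi 0) t := by
    intro t ht
    exact (Real.hasDerivAt_rpow_const (Or.inl (ne_of_gt ht))).hasDerivWithinAt
  have hsub : I = ∫⁻ t in Ioi (0:ℝ), ENNReal.ofReal |θ * t ^ (θ - 1)| * G (t ^ θ) := by
    rw [hIdef]
    conv_lhs => rw [← himg]
    have := MeasureTheory.lintegral_image_eq_lintegral_abs_det_fderiv_mul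
      (volume : Measure ℝ) measurableSet_Ioi
      (f' := fun t => (1 : ℝ →L[ℝ] ℝ).smulRight (θ * t ^ (θ - 1)))
      (fun t ht => (hder t ht).hasFDerivWithinAt) hinj G
    simpa only [ContinuousLinearMap.smulRight_one_eq_toSpanSingleton, ContinuousLinearMap.det_toSpanSingleton] using this
  -- rewrite integrand on Ioi 0
  have hI_eq : I = ENNReal.ofReal θ * ∫⁻ t in Ioi (0:ℝ), ENNReal.ofReal t ^ (θ - 1) * G (t ^ θ) := by
    rw [hsub, ← lintegral_const_mul' _ _ ENNReal.ofReal_ne_top]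
    refine setLIntegral_congr_fun measurableSet_Ioi (fun t ht => ?_)
    have ht' : (0:ℝ) < t := ht
    have hpos : 0 < θ * t ^ (θ - 1) := mul_pos hθ (Real.rpow_pos_of_pos ht' _)
    rw [abs_of_pos hpos, ENNReal.ofReal_mul hθ.le, ENNReal.ofReal_rpow_of_pos ht',
      mul_assoc]
  set J : ℝ≥0∞ := ∫⁻ t in Ioi (0:ℝ), ENNReal.ofReal t ^ (θ - 1) * G (t ^ θ) with hJdef
  have hofθ0 : ENNReal.ofReal θ ≠ 0 := (ENNReal.ofReal_pos.2 hθ).ne'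
  have hJ : J = (ENNReal.ofReal θ)⁻¹ * I := by
    rw [hI_eq, ← mul_assoc, ENNReal.inv_mul_cancel hofθ0 ENNReal.ofReal_ne_top, one_mul]
  -- pointwise bound and integration
  have hexp : (0:ℝ) ≤ 1 / θ - 1 := by
    rw [sub_nonneg, le_div_iff₀ hθ]
    linarith
  have hmain : (∫⁻ t in Ioi (0:ℝ), hc n δ₂ (A t)) ≤
      I ^ (1 / θ - 1) * J := by
    rw [hJdef, ← lintegral_const_mul' _ _ (ENNReal.rpow_ne_top_of_nonneg hexp hItop)]
    refine lintegral_mono_ae ((ae_restrict_iff' measurableSet_Ioi).2 (ae_of_all _ ?_))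
    intro t ht
    have ht' : (0:ℝ) < t := ht
    have htθ : (0:ℝ) < t ^ θ := Real.rpow_pos_of_pos ht' θ
    have hAB : hc n δ₁ (A t) = G (t ^ θ) := by rw [← hBA t ht']
    have step1 : hc n δ₂ (A t) ≤ G (t ^ θ) ^ (1 / θ) := by
      have h' := hc_le_hc_rpow n h1 h2.le (A t)
      have hexp2 : δ₂ / δ₁ = 1 / θ := by rw [hθdef, one_div, inv_div]
      rwa [hAB, hexp2] at h'
    have step2 : G (t ^ θ) ^ (1 / θ) = G (t ^ θ) ^ (1 / θ - 1) * G (t ^ θ) := by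
      have := ENNReal.rpow_add_of_nonneg (x := G (t ^ θ)) (1 / θ - 1) 1 hexp zero_le_one
      rw [ENNReal.rpow_one] at this
      rw [← this]
      norm_num
    have hb0 : ENNReal.ofReal (t ^ θ) ≠ 0 := (ENNReal.ofReal_pos.2 htθ).ne'
    have step3 : G (t ^ θ) ≤ I / ENNReal.ofReal (t ^ θ) :=
      (ENNReal.le_div_iff_mul_le (Or.inl hb0) (Or.inl ENNReal.ofReal_ne_top)).2
        (by rw [mul_comm]; exact hGs _ htθ)
    have step4 : G (t ^ θ) ^ (1 / θ - 1) ≤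
        I ^ (1 / θ - 1) * ENNReal.ofReal t ^ (θ - 1) := by
      calc G (t ^ θ) ^ (1 / θ - 1) ≤ (I / ENNReal.ofReal (t ^ θ)) ^ (1 / θ - 1) :=
            ENNReal.rpow_le_rpow step3 hexp
        _ = I ^ (1 / θ - 1) / (ENNReal.ofReal (t ^ θ)) ^ (1 / θ - 1) :=
            ENNReal.div_rpow_of_nonneg _ _ hexp
        _ = I ^ (1 / θ - 1) * ENNReal.ofReal t ^ (θ - 1) := by
            rw [← ENNReal.ofReal_rpow_of_pos ht', ← ENNReal.rpow_mul]
            have hme : θ * (1 / θ - 1) = 1 - θ := by field_simp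
            rw [hme, div_eq_mul_inv, ← ENNReal.rpow_neg]
            norm_num
    calc hc n δ₂ (A t) ≤ G (t ^ θ) ^ (1 / θ) := step1
      _ = G (t ^ θ) ^ (1 / θ - 1) * G (t ^ θ) := step2
      _ ≤ I ^ (1 / θ - 1) * ENNReal.ofReal t ^ (θ - 1) * G (t ^ θ) :=
          mul_le_mul_left step4 _
      _ = I ^ (1 / θ - 1) * (ENNReal.ofReal t ^ (θ - 1) * G (t ^ θ)) := by
          rw [mul_assoc]
  have hfinal : choquet n δ₂ Ω (fun x => (f x).abs) ≤ ENNReal.ofReal (δ₂ / δ₁) * I ^ (1 / θ) := by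
    rw [hchoq2]
    calc (∫⁻ t in Ioi (0:ℝ), hc n δ₂ (A t)) ≤ I ^ (1 / θ - 1) * J := hmain
      _ = (ENNReal.ofReal θ)⁻¹ * (I ^ (1 / θ - 1) * I) := by
          rw [hJ]; ring
      _ = ENNReal.ofReal (δ₂ / δ₁) * I ^ (1 / θ) := by
          have e1 : I ^ (1 / θ - 1) * I = I ^ (1 / θ) := by
            have := ENNReal.rpow_add_of_nonneg (x := I) (1 / θ - 1) 1 hexp zero_le_one
            rw [ENNReal.rpow_one] at this
            rw [← this]
            norm_num
          have e2 : (ENNReal.ofReal θ)⁻¹ = ENNReal.ofReal (δ₂ / δ₁) := by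
            rw [← ENNReal.ofReal_inv_of_pos hθ, hθdef, inv_div]
          rw [e1, e2]
  -- conclude by taking rpow (1/δ₂)
  rw [hchoq1]
  calc (choquet n δ₂ Ω (fun x => (f x).abs)) ^ (1 / δ₂)
      ≤ (ENNReal.ofReal (δ₂ / δ₁) * I ^ (1 / θ)) ^ (1 / δ₂) :=
        ENNReal.rpow_le_rpow hfinal (by positivity)
    _ = (ENNReal.ofReal (δ₂ / δ₁)) ^ (1 / δ₂) * (I ^ (1 / θ)) ^ (1 / δ₂) :=
        ENNReal.mul_rpow_of_nonneg _ _ (by positivity)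
    _ = (ENNReal.ofReal (δ₂ / δ₁)) ^ (1 / δ₂) * I ^ (1 / δ₁) := by
        have hee : 1 / θ * (1 / δ₂) = 1 / δ₁ := by
          rw [hθdef]
          field_simp
        rw [← ENNReal.rpow_mul, hee]
end

section
/- (Weak-type bound for the fractional maximal function via a ball-covering argument) Let $\Omega\subseteq\mathbb{R}^n$ be a bounded open set and $\eta\in[0,n)$. There is a constant $c(n)$ such that for every $f\in L^1(\Omega)$ (extended by zero outside $\Omega$) and every $t>0$, $\mathcal{H}^{n-\eta}_\infty(\{x\in\Omega : \mathcal{M}_\eta f(x)>t\}) \le \frac{c(n)}{t}\,\|f\|_{L^1(\Omega)}$. -/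
open MeasureTheory Metric Set ENNReal

/-- Fractional centred Hardy–Littlewood maximal function. -/
noncomputable def fracMax (n : ℕ) (η : ℝ) (f : EuclideanSpace ℝ (Fin n) → ℝ)
    (x : EuclideanSpace ℝ (Fin n)) : ℝ≥0∞ :=
  ⨆ (r : ℝ) (_ : 0 < r),
    ENNReal.ofReal (r ^ (η - n)) * ∫⁻ y in ball x r, ENNReal.ofReal |f y|

lemma geom_aux {δ : ℝ} (hδ : 0 < δ) :
    ∃ C : ℝ≥0∞, C ≠ ⊤ ∧ ∀ ε : ℝ, 0 < ε →
      ∑' i : ℕ, ENNReal.ofReal ((ε * (2⁻¹ : ℝ) ^ i) ^ δ) ≤ ENNReal.ofReal (ε ^ δ) * C := by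
  set q : ℝ := (2⁻¹ : ℝ) ^ δ with hq
  have hq0 : 0 ≤ q := Real.rpow_nonneg (by norm_num) _
  have hq1 : q < 1 := Real.rpow_lt_one (by norm_num) (by norm_num) hδ
  refine ⟨(1 - ENNReal.ofReal q)⁻¹, ?_, fun ε hε => ?_⟩
  · have : ENNReal.ofReal q < 1 := ENNReal.ofReal_lt_one.mpr hq1
    simp [ENNReal.inv_eq_top, tsub_eq_zero_iff_le, not_le, this, hq1]
  · have key : ∀ i : ℕ, ENNReal.ofReal ((ε * (2⁻¹ : ℝ) ^ i) ^ δ)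
        = ENNReal.ofReal (ε ^ δ) * (ENNReal.ofReal q) ^ i := by
      intro i
      have h2 : (0:ℝ) ≤ (2⁻¹ : ℝ) ^ i := by positivity
      rw [Real.mul_rpow hε.le h2, ← Real.rpow_natCast (2⁻¹ : ℝ) i, ← Real.rpow_mul (by norm_num),
        mul_comm (i:ℝ) δ, Real.rpow_mul (by norm_num), Real.rpow_natCast,
        ENNReal.ofReal_mul (Real.rpow_nonneg hε.le _), ENNReal.ofReal_pow hq0]
    simp_rw [key]
    rw [ENNReal.tsum_mul_left, ENNReal.tsum_geometric]

lemma hc_le_tsum (n : ℕ) {δ : ℝ} (hδ : 0 < δ) (E : Set (EuclideanSpace ℝ (Fin n)))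
    (s : Set (EuclideanSpace ℝ (Fin n))) (hs : s.Countable) (ρ : EuclideanSpace ℝ (Fin n) → ℝ)
    (hρ : ∀ b ∈ s, 0 < ρ b) (hcov : E ⊆ ⋃ b ∈ s, ball b (ρ b)) :
    hc n δ E ≤ ∑' b : s, ENNReal.ofReal (ρ b ^ δ) := by
  obtain ⟨C, hC, hgeom⟩ := geom_aux hδ
  refine ENNReal.le_of_forall_pos_le_add fun w hw _ => ?_
  obtain ⟨ε, hε, hεw⟩ : ∃ ε : ℝ, 0 < ε ∧ ENNReal.ofReal (ε ^ δ) * C ≤ (w : ℝ≥0∞) := by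
    set a : ℝ := (w : ℝ) / (C.toReal + 1) with ha
    have hCt : 0 ≤ C.toReal := ENNReal.toReal_nonneg
    have ha0 : 0 < a := div_pos hw (by linarith)
    refine ⟨a ^ (1/δ), Real.rpow_pos_of_pos ha0 _, ?_⟩
    have hex : (a ^ (1/δ)) ^ δ = a := by
      rw [← Real.rpow_mul ha0.le, one_div, inv_mul_cancel₀ hδ.ne', Real.rpow_one]
    rw [hex]
    calc ENNReal.ofReal a * C ≤ ENNReal.ofReal a * ENNReal.ofReal (C.toReal + 1) := by
          gcongr
          exact le_trans (le_of_eq (ENNReal.ofReal_toReal hC).symm)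
            (ENNReal.ofReal_le_ofReal (by linarith))
      _ = ENNReal.ofReal (a * (C.toReal + 1)) := (ENNReal.ofReal_mul ha0.le).symm
      _ = (w : ℝ≥0∞) := by
          rw [ha, div_mul_cancel₀ _ (by linarith : C.toReal + 1 ≠ 0)]
          simp [ENNReal.ofReal_coe_nnreal]
  haveI : Encodable s := hs.toEncodable
  set c : ℕ → EuclideanSpace ℝ (Fin n) :=
    fun i => ((Encodable.decode₂ s i).map Subtype.val).getD 0 with hc_def
  set r : ℕ → ℝ :=
    fun i => (Encodable.decode₂ s i).elim (ε * (2⁻¹:ℝ)^i) (fun b => ρ b) with hr_def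
  have hrpos : ∀ i, 0 < r i := by
    intro i
    rcases hd : Encodable.decode₂ s i with _ | b
    · simp only [hr_def, hd, Option.elim]; positivity
    · simp only [hr_def, hd, Option.elim]; exact hρ b b.2
  have hcover : E ⊆ ⋃ i, ball (c i) (r i) := by
    intro x hx
    obtain ⟨b, hb, hxb⟩ := mem_iUnion₂.1 (hcov hx)
    refine mem_iUnion.2 ⟨Encodable.encode (⟨b, hb⟩ : s), ?_⟩
    have hd : Encodable.decode₂ s (Encodable.encode (⟨b, hb⟩ : s)) = some ⟨b, hb⟩ :=
      Encodable.decode₂_encode _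
    simp only [hc_def, hr_def, hd, Option.map_some, Option.getD_some, Option.elim]
    exact hxb
  have h1 : hc n δ E ≤ ∑' i, ENNReal.ofReal (r i ^ δ) :=
    iInf_le_of_le c (iInf_le_of_le r (iInf_le_of_le hrpos (iInf_le _ hcover)))
  refine h1.trans ?_
  set g : ℕ → ℝ≥0∞ :=
    fun i => (Encodable.decode₂ s i).elim 0 (fun b => ENNReal.ofReal (ρ b ^ δ)) with hg
  set h : ℕ → ℝ≥0∞ := fun i => ENNReal.ofReal ((ε * (2⁻¹:ℝ)^i) ^ δ) with hh
  have hle : ∀ i, ENNReal.ofReal (r i ^ δ) ≤ g i + h i := by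
    intro i
    rcases hd : Encodable.decode₂ s i with _ | b
    · simp [hr_def, hg, hh, hd]
    · simp only [hr_def, hg, hh, hd, Option.elim]; exact le_self_add
  calc ∑' i, ENNReal.ofReal (r i ^ δ) ≤ ∑' i, (g i + h i) := ENNReal.tsum_le_tsum hle
    _ = (∑' i, g i) + ∑' i, h i := ENNReal.tsum_add
    _ ≤ (∑' b : s, ENNReal.ofReal (ρ b ^ δ)) + ↑w := by
        gcongr
        · have hinj : Function.Injective (Encodable.encode : s → ℕ) := Encodable.encode_injective
          have hsupp : Function.support g ⊆ Set.range (Encodable.encode : s → ℕ) := by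
            intro i hi
            rcases hd : Encodable.decode₂ s i with _ | b
            · simp [hg, hd] at hi
            · exact ⟨b, Encodable.mem_decode₂.1 hd⟩
          have heq := hinj.tsum_eq (f := g) hsupp
          rw [← heq]
          refine le_of_eq ?_
          refine tsum_congr fun b => ?_
          simp [hg, Encodable.decode₂_encode]
        · exact (hgeom ε hε).trans hεw

theorem stmt_17 (n : ℕ) (η : ℝ) (hη : 0 ≤ η) (hηn : η < n) :
    ∃ c : ℝ≥0∞, c ≠ ⊤ ∧
      ∀ Ω : Set (EuclideanSpace ℝ (Fin n)), IsOpen Ω → Bornology.IsBounded Ω →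
        ∀ f : EuclideanSpace ℝ (Fin n) → ℝ, IntegrableOn f Ω →
          ∀ t : ℝ, 0 < t →
            hc n ((n : ℝ) - η) {x | x ∈ Ω ∧ ENNReal.ofReal t < fracMax n η (Ω.indicator f) x} ≤
              c / ENNReal.ofReal t * ∫⁻ y in Ω, ENNReal.ofReal |f y| := by
  set δ : ℝ := (n : ℝ) - η with hδdef
  have hδ : 0 < δ := sub_pos.2 hηn
  refine ⟨ENNReal.ofReal (5 ^ δ), ENNReal.ofReal_ne_top, ?_⟩
  intro Ω hΩo hΩb f hf t ht
  set E := {x | x ∈ Ω ∧ ENNReal.ofReal t < fracMax n η (Ω.indicator f) x} with hE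
  set A : ℝ≥0∞ := ∫⁻ y in Ω, ENNReal.ofReal |f y| with hA
  have ht0 : ENNReal.ofReal t ≠ 0 := (ENNReal.ofReal_pos.2 ht).ne'
  have hA_top : A ≠ ⊤ := by
    have h2 := hf.2
    rw [HasFiniteIntegral] at h2
    rw [hA]
    simp_rw [← Real.enorm_eq_ofReal_abs]
    exact h2.ne
  -- every ball integral of the indicator is at most A
  have hball : ∀ (S : Set (EuclideanSpace ℝ (Fin n))),
      (∫⁻ y in S, ENNReal.ofReal |Ω.indicator f y|) ≤ A := by
    intro S
    have heq : ∀ y, ENNReal.ofReal |Ω.indicator f y|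
        = Ω.indicator (fun y => ENNReal.ofReal |f y|) y := by
      intro y; by_cases hy : y ∈ Ω <;> simp [hy]
    simp_rw [heq]
    rw [lintegral_indicator hΩo.measurableSet, Measure.restrict_restrict hΩo.measurableSet]
    exact lintegral_mono_set inter_subset_left
  -- choose radii
  have hch : ∀ x, x ∈ E → ∃ r : ℝ, 0 < r ∧ ENNReal.ofReal t
      < ENNReal.ofReal (r ^ (η - n)) * ∫⁻ y in ball x r, ENNReal.ofReal |Ω.indicator f y| := by
    intro x hx
    have h2 := hx.2
    rw [fracMax, lt_iSup_iff] at h2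
    obtain ⟨r, hr⟩ := h2
    rw [lt_iSup_iff] at hr
    obtain ⟨hr0, h⟩ := hr
    exact ⟨r, hr0, h⟩
  choose! rad hrad0 hrad using hch
  -- key per-point estimate
  have key : ∀ x ∈ E, ENNReal.ofReal (rad x ^ δ)
      ≤ (∫⁻ y in ball x (rad x), ENNReal.ofReal |Ω.indicator f y|) / ENNReal.ofReal t := by
    intro x hx
    rw [ENNReal.le_div_iff_mul_le (Or.inl ht0) (Or.inl ENNReal.ofReal_ne_top)]
    calc ENNReal.ofReal (rad x ^ δ) * ENNReal.ofReal t
        ≤ ENNReal.ofReal (rad x ^ δ) * (ENNReal.ofReal (rad x ^ (η - n)) *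
            ∫⁻ y in ball x (rad x), ENNReal.ofReal |Ω.indicator f y|) := by
          gcongr
          exact (hrad x hx).le
      _ = ∫⁻ y in ball x (rad x), ENNReal.ofReal |Ω.indicator f y| := by
          rw [← mul_assoc, ← ENNReal.ofReal_mul (Real.rpow_nonneg (hrad0 x hx).le _),
            ← Real.rpow_add (hrad0 x hx)]
          have : δ + (η - n) = 0 := by rw [hδdef]; ring
          rw [this, Real.rpow_zero, ENNReal.ofReal_one, one_mul]
  -- radius bound
  set Q : ℝ≥0∞ := A / ENNReal.ofReal t with hQ
  have hQtop : Q ≠ ⊤ := (ENNReal.div_lt_top hA_top ht0).ne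
  set R : ℝ := Q.toReal ^ (1 / δ) with hR
  have hrR : ∀ x ∈ E, rad x ≤ R := by
    intro x hx
    have h1 : ENNReal.ofReal (rad x ^ δ) ≤ Q := by
      refine (key x hx).trans ?_
      rw [hQ]
      gcongr
      exact hball _
    have h2 : rad x ^ δ ≤ Q.toReal :=
      (ENNReal.ofReal_le_iff_le_toReal hQtop).1 h1
    have h3 : (rad x ^ δ) ^ (1 / δ) ≤ R :=
      Real.rpow_le_rpow (Real.rpow_nonneg (hrad0 x hx).le _) h2 (by positivity)
    rwa [← Real.rpow_mul (hrad0 x hx).le, mul_one_div, div_self hδ.ne', Real.rpow_one] at h3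
  -- Vitali covering
  obtain ⟨u, huE, hdisj, hcov⟩ :=
    Vitali.exists_disjoint_subfamily_covering_enlargement_closedBall E id rad R hrR 4
      (by norm_num)
  simp only [id] at hdisj hcov
  have hradu : ∀ b ∈ u, 0 < rad b := fun b hb => hrad0 b (huE hb)
  have hucnt : u.Countable := by
    refine Set.PairwiseDisjoint.countable_of_isOpen
      (hdisj.mono fun a => ball_subset_closedBall) (fun b _ => isOpen_ball)
      (fun b hb => ⟨b, mem_ball_self (hradu b hb)⟩)
  have hcov5 : E ⊆ ⋃ b ∈ u, ball b (5 * rad b) := by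
    intro a ha
    obtain ⟨b, hb, hsub⟩ := hcov a ha
    refine mem_iUnion₂.2 ⟨b, hb, ?_⟩
    have h1 : a ∈ closedBall a (rad a) := mem_closedBall_self (hrad0 a ha).le
    have h2 : closedBall b (4 * rad b) ⊆ ball b (5 * rad b) :=
      closedBall_subset_ball (by nlinarith [hradu b hb])
    exact h2 (hsub h1)
  have hmain := hc_le_tsum n hδ E u hucnt (fun b => 5 * rad b)
    (fun b hb => by have := hradu b hb; positivity) hcov5
  refine hmain.trans ?_
  haveI := hucnt.to_subtype
  have hdisj' : Pairwise (Function.onFun Disjoint fun b : u => ball (b : EuclideanSpace ℝ (Fin n)) (rad b)) := by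
    have h := hdisj.subtype
    intro i j hij
    exact (h hij).mono ball_subset_closedBall ball_subset_closedBall
  have hsum1 : ∑' b : u, (∫⁻ y in ball (b : EuclideanSpace ℝ (Fin n)) (rad b),
      ENNReal.ofReal |Ω.indicator f y|) ≤ A := by
    rw [← lintegral_iUnion (fun b => measurableSet_ball) hdisj']
    exact hball _
  calc ∑' b : u, ENNReal.ofReal ((5 * rad (b : EuclideanSpace ℝ (Fin n))) ^ δ)
      = ∑' b : u, ENNReal.ofReal (5 ^ δ) * ENNReal.ofReal (rad (b : EuclideanSpace ℝ (Fin n)) ^ δ) := by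
        refine tsum_congr fun b => ?_
        rw [Real.mul_rpow (by norm_num) (hradu b b.2).le,
          ENNReal.ofReal_mul (Real.rpow_nonneg (by norm_num) _)]
    _ ≤ ∑' b : u, ENNReal.ofReal (5 ^ δ) * ((∫⁻ y in ball (b : EuclideanSpace ℝ (Fin n)) (rad b),
          ENNReal.ofReal |Ω.indicator f y|) / ENNReal.ofReal t) := by
        refine ENNReal.tsum_le_tsum fun b => ?_
        gcongr
        exact key b (huE b.2)
    _ = ENNReal.ofReal (5 ^ δ) * ((∑' b : u, ∫⁻ y in ball (b : EuclideanSpace ℝ (Fin n)) (rad b),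
          ENNReal.ofReal |Ω.indicator f y|) / ENNReal.ofReal t) := by
        rw [ENNReal.tsum_mul_left]
        congr 1
        simp_rw [div_eq_mul_inv]
        rw [ENNReal.tsum_mul_right]
    _ ≤ ENNReal.ofReal (5 ^ δ) * (A / ENNReal.ofReal t) := by gcongr
    _ = ENNReal.ofReal (5 ^ δ) / ENNReal.ofReal t * A := by
        rw [div_eq_mul_inv, div_eq_mul_inv, mul_comm A, ← mul_assoc]
end
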